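/- Fay's trisecant identity (the associative Yang–Baxter equation for the Kronecker function): for every τ with Im τ > 0 and all complex numbers z, z', μ, μ' such that none of z, z', z+z', μ, μ', μ−μ', μ'−μ lies in the lattice ℤ + τℤ, one has φ(z,μ)·φ(z',μ') = φ(z+z',μ')·φ(z,μ−μ') + φ(z',μ'−μ)·φ(z+z',μ). -/

import Mathlib

/-!
Expanding `θ(u|τ)θ(v|τ)` as a double theta series and splitting the index pairs `(m, n)` by the
parity of `m + n` gives the duplication formula
`θ(u)θ(v) = θ(u+v-½|2τ) ϑ(u-v|2τ) - ϑ(u+v|2τ) θ(u-v-½|2τ)`, with `ϑ = jacobiTheta₂`.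
Six instances of it add up to a three-term relation between products of four theta values, which
is the identity once the denominators of `φ` are cleared.

Clearing denominators needs `θ(·|τ)` to vanish only on the lattice. For `Im τ ≥ 1` this holds
because, in the strip `|Im z| ≤ Im τ / 2`, `θ(z) = 2 q^{1/4} sin(πz) (1 + ε)` with `|ε| < 1`.
The duplication formula at `v = u - ½` carries the property from `2τ` down to `τ`, and finitely
many doublings of `τ` reach `Im τ ≥ 1`.
-/

noncomputable section

open Complex

/-- The odd Jacobi theta function
`θ(z|τ) = −i Σ_{n ∈ ℤ} (−1)^n exp(πiτ(n+1/2)² + (2n+1)πi z)`. -/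
def jtheta (τ z : ℂ) : ℂ :=
  -Complex.I * ∑' n : ℤ, (-1 : ℂ) ^ n *
    Complex.exp ((Real.pi : ℂ) * Complex.I * τ * ((n : ℂ) + 1 / 2) ^ 2 +
      (2 * (n : ℂ) + 1) * (Real.pi : ℂ) * Complex.I * z)

/-- The lattice `ℤ + τℤ`. -/
def lattice (τ : ℂ) : Set ℂ := {z | ∃ a b : ℤ, z = (a : ℂ) + τ * (b : ℂ)}

/-- The Kronecker function `φ(z,μ) = θ'(0)·θ(z+μ)/(θ(z)·θ(μ))`. -/
def kronecker (τ z μ : ℂ) : ℂ :=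
  deriv (jtheta τ) 0 * jtheta τ (z + μ) / (jtheta τ z * jtheta τ μ)

open scoped Real

def jthetaTerm (τ z : ℂ) (n : ℤ) : ℂ :=
  (-1 : ℂ) ^ n * exp (π * I * τ * (n + 1 / 2) ^ 2 + (2 * n + 1) * π * I * z)

lemma jtheta_eq_tsum (τ z : ℂ) : jtheta τ z = -I * ∑' n : ℤ, jthetaTerm τ z n := rfl

lemma jthetaTerm_eq_exp (τ z : ℂ) (n : ℤ) :
    jthetaTerm τ z n =
      exp (n * (π * I) + π * I * τ * (n + 1 / 2) ^ 2 + (2 * n + 1) * π * I * z) := by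
  rw [jthetaTerm, ← exp_pi_mul_I, ← exp_int_mul, ← exp_add, add_assoc]

lemma jthetaTerm_eq_mul_jacobiTheta₂_term (τ z : ℂ) (n : ℤ) :
    jthetaTerm τ z n =
      exp (π * I * τ / 4 + π * I * z) * jacobiTheta₂_term n (z + τ / 2 + 1 / 2) τ := by
  rw [jthetaTerm_eq_exp, jacobiTheta₂_term, ← exp_add]
  exact exp_eq_exp_iff_exists_int.mpr ⟨0, by push_cast; ring⟩

lemma jtheta_eq_mul_jacobiTheta₂ (τ z : ℂ) :
    jtheta τ z = -I * exp (π * I * τ / 4 + π * I * z) * jacobiTheta₂ (z + τ / 2 + 1 / 2) τ := by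
  simp_rw [jtheta_eq_tsum, jthetaTerm_eq_mul_jacobiTheta₂_term, tsum_mul_left, jacobiTheta₂,
    mul_assoc]

lemma jtheta_eq_zero_iff_jacobiTheta₂_eq_zero (τ z : ℂ) :
    jtheta τ z = 0 ↔ jacobiTheta₂ (z + τ / 2 + 1 / 2) τ = 0 := by
  simp [jtheta_eq_mul_jacobiTheta₂, I_ne_zero, exp_ne_zero]

lemma summable_norm_jacobiTheta₂_term (z : ℂ) {τ : ℂ} (hτ : 0 < τ.im) :
    Summable fun n : ℤ ↦ ‖jacobiTheta₂_term n z τ‖ :=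
  summable_norm_iff.mpr ((summable_jacobiTheta₂_term_iff z τ).mpr hτ)

lemma summable_norm_jthetaTerm {τ : ℂ} (hτ : 0 < τ.im) (z : ℂ) :
    Summable fun n : ℤ ↦ ‖jthetaTerm τ z n‖ := by
  simp_rw [jthetaTerm_eq_mul_jacobiTheta₂_term, norm_mul]
  exact (summable_norm_jacobiTheta₂_term _ hτ).mul_left _

lemma jtheta_eq_mul_of_jthetaTerm {τ z w c : ℂ} (e : ℤ ≃ ℤ)
    (h : ∀ n, jthetaTerm τ w (e n) = c * jthetaTerm τ z n) : jtheta τ w = c * jtheta τ z := by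
  rw [jtheta_eq_tsum, jtheta_eq_tsum, ← e.tsum_eq, tsum_congr h, tsum_mul_left, mul_left_comm]

lemma jtheta_neg (τ z : ℂ) : jtheta τ (-z) = -jtheta τ z := by
  rw [← neg_one_mul (jtheta τ z)]
  refine jtheta_eq_mul_of_jthetaTerm ((Equiv.addRight 1).trans (Equiv.neg ℤ)) fun n ↦ ?_
  simp only [Equiv.trans_apply, Equiv.coe_addRight, Equiv.neg_apply]
  rw [← exp_pi_mul_I, jthetaTerm_eq_exp, jthetaTerm_eq_exp, ← exp_add]
  exact exp_eq_exp_iff_exists_int.mpr ⟨-(n + 1), by push_cast; ring⟩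

lemma jtheta_zero (τ : ℂ) : jtheta τ 0 = 0 :=
  CharZero.eq_neg_self_iff.mp (by simpa using jtheta_neg τ 0)

lemma jtheta_add_int_add_int_mul (τ z : ℂ) (a b : ℤ) :
    jtheta τ (z + a + τ * b) =
      exp ((a + b) * (π * I) - π * I * b ^ 2 * τ - 2 * b * π * I * z) * jtheta τ z := by
  refine jtheta_eq_mul_of_jthetaTerm (Equiv.subRight b) fun n ↦ ?_
  rw [Equiv.subRight_apply, jthetaTerm_eq_exp, jthetaTerm_eq_exp, ← exp_add]
  exact exp_eq_exp_iff_exists_int.mpr ⟨(n - b) * a - b, by push_cast; ring⟩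

lemma jtheta_add_eq_zero_iff {τ w : ℂ} (hw : w ∈ lattice τ) (z : ℂ) :
    jtheta τ (z + w) = 0 ↔ jtheta τ z = 0 := by
  obtain ⟨a, b, rfl⟩ := hw
  rw [← add_assoc, jtheta_add_int_add_int_mul, mul_eq_zero, or_iff_right (exp_ne_zero _)]

def oddSumPair (p : ℤ × ℤ) : ℤ × ℤ := (p.1 + p.2, p.1 - p.2 - 1)

def evenSumPair (p : ℤ × ℤ) : ℤ × ℤ := (p.1 + p.2, p.1 - p.2)

lemma oddSumPair_injective : Function.Injective oddSumPair := by
  intro p q h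
  simp only [oddSumPair, Prod.ext_iff] at h ⊢
  omega

lemma evenSumPair_injective : Function.Injective evenSumPair := by
  intro p q h
  simp only [evenSumPair, Prod.ext_iff] at h ⊢
  omega

lemma isCompl_range_oddSumPair_evenSumPair :
    IsCompl (Set.range oddSumPair) (Set.range evenSumPair) := by
  constructor
  · rw [Set.disjoint_iff_forall_ne]
    rintro _ ⟨p, rfl⟩ _ ⟨q, rfl⟩ h
    simp only [oddSumPair, evenSumPair, Prod.ext_iff] at h
    omega
  · rw [codisjoint_iff_le_sup]
    rintro ⟨m, n⟩ -
    rcases Int.even_or_odd (m + n) with ⟨c, hc⟩ | ⟨c, hc⟩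
    · exact Or.inr ⟨(c, m - c), by simp only [evenSumPair, Prod.ext_iff]; omega⟩
    · exact Or.inl ⟨(c + 1, m - c - 1), by simp only [oddSumPair, Prod.ext_iff]; omega⟩

lemma jthetaTerm_mul_jthetaTerm_oddSumPair (τ u v : ℂ) (k l : ℤ) :
    jthetaTerm τ u (k + l) * jthetaTerm τ v (k - l - 1) =
      -I * (jacobiTheta₂_term k (u + v) (2 * τ) * jthetaTerm (2 * τ) (u - v - 1 / 2) l) := by
  rw [show -I = exp (-(π / 2 * I)) by rw [exp_neg, exp_pi_div_two_mul_I, inv_I], jthetaTerm_eq_exp,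
    jthetaTerm_eq_exp, jthetaTerm_eq_exp, jacobiTheta₂_term, ← exp_add, ← exp_add, ← exp_add]
  exact exp_eq_exp_iff_exists_int.mpr ⟨k, by push_cast; ring⟩

lemma jthetaTerm_mul_jthetaTerm_evenSumPair (τ u v : ℂ) (k l : ℤ) :
    jthetaTerm τ u (k + l) * jthetaTerm τ v (k - l) =
      I * (jthetaTerm (2 * τ) (u + v - 1 / 2) k * jacobiTheta₂_term l (u - v) (2 * τ)) := by
  rw [← exp_pi_div_two_mul_I, jthetaTerm_eq_exp, jthetaTerm_eq_exp, jthetaTerm_eq_exp,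
    jacobiTheta₂_term, ← exp_add, ← exp_add, ← exp_add]
  exact exp_eq_exp_iff_exists_int.mpr ⟨k, by push_cast; ring⟩

lemma two_mul_im_pos {τ : ℂ} (hτ : 0 < τ.im) : 0 < (2 * τ).im := by
  simpa using hτ

lemma hasSum_mul_of_summable_norm {R ι κ : Type*} [NormedRing R] [CompleteSpace R]
    {f : ι → R} {g : κ → R} (hf : Summable fun n ↦ ‖f n‖) (hg : Summable fun n ↦ ‖g n‖) :
    HasSum (fun p : ι × κ ↦ f p.1 * g p.2) ((∑' n, f n) * ∑' n, g n) :=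
  hf.of_norm.hasSum.mul hg.of_norm.hasSum (summable_mul_of_summable_norm hf hg)

theorem jtheta_mul_jtheta {τ : ℂ} (hτ : 0 < τ.im) (u v : ℂ) :
    jtheta τ u * jtheta τ v =
      jtheta (2 * τ) (u + v - 1 / 2) * jacobiTheta₂ (u - v) (2 * τ) -
        jacobiTheta₂ (u + v) (2 * τ) * jtheta (2 * τ) (u - v - 1 / 2) := by
  have hτ₂ := two_mul_im_pos hτ
  set P : ℤ × ℤ → ℂ := fun p ↦ jthetaTerm τ u p.1 * jthetaTerm τ v p.2
  have hodd : HasSum (P ∘ oddSumPair) (-I * (jacobiTheta₂ (u + v) (2 * τ) *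
      ∑' n, jthetaTerm (2 * τ) (u - v - 1 / 2) n)) := by
    have := (hasSum_mul_of_summable_norm (summable_norm_jacobiTheta₂_term (u + v) hτ₂)
      (summable_norm_jthetaTerm hτ₂ (u - v - 1 / 2))).mul_left (-I)
    exact this.congr_fun fun p ↦ jthetaTerm_mul_jthetaTerm_oddSumPair τ u v p.1 p.2
  have heven : HasSum (P ∘ evenSumPair) (I * ((∑' n, jthetaTerm (2 * τ) (u + v - 1 / 2) n) *
      jacobiTheta₂ (u - v) (2 * τ))) := by
    have := (hasSum_mul_of_summable_norm (summable_norm_jthetaTerm hτ₂ (u + v - 1 / 2))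
      (summable_norm_jacobiTheta₂_term (u - v) hτ₂)).mul_left I
    exact this.congr_fun fun p ↦ jthetaTerm_mul_jthetaTerm_evenSumPair τ u v p.1 p.2
  have hprod := (hasSum_mul_of_summable_norm (summable_norm_jthetaTerm hτ u)
    (summable_norm_jthetaTerm hτ v)).unique
    ((oddSumPair_injective.hasSum_range_iff.mpr hodd).add_isCompl
      isCompl_range_oddSumPair_evenSumPair (evenSumPair_injective.hasSum_range_iff.mpr heven))
  simp only [jtheta_eq_tsum]
  linear_combination (-1 : ℂ) * hprod +
    (∑' n, jthetaTerm τ u n) * (∑' n, jthetaTerm τ v n) * I_sq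

def ThetaZerosInLattice (τ : ℂ) : Prop := ∀ z, jtheta τ z = 0 → z ∈ lattice τ

lemma notMem_lattice_two_mul_of_im_eq {τ w : ℂ} (hτ : 0 < τ.im) (hw : w.im = -τ.im) :
    w ∉ lattice (2 * τ) := by
  rintro ⟨a, b, rfl⟩
  have hb : ((2 * b + 1 : ℤ) : ℝ) * τ.im = 0 := by
    simp only [add_im, intCast_im, mul_im, re_ofNat, im_ofNat, intCast_re] at hw
    push_cast
    linarith
  have : 2 * b + 1 = 0 := by exact_mod_cast (mul_eq_zero.mp hb).resolve_right hτ.ne'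
  omega

lemma half_notMem_lattice {τ : ℂ} (hτ : 0 < τ.im) : (1 / 2 : ℂ) ∉ lattice τ := by
  rintro ⟨a, b, h⟩
  have hb : b = 0 := by
    have := congrArg im h
    simp only [one_div, inv_im, im_ofNat, normSq_ofNat, zero_div, neg_zero, add_im, intCast_im,
      mul_im, intCast_re, mul_zero, zero_add] at this
    exact_mod_cast (mul_eq_zero.mp this.symm).resolve_left hτ.ne'
  subst hb
  have : (2 * a : ℤ) = 1 := by
    have := congrArg re h
    simp only [one_div, inv_re, re_ofNat, normSq_ofNat, div_self_mul_self', Int.cast_zero,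
      mul_zero, add_zero, intCast_re] at this
    exact_mod_cast (by linarith : (2 * a : ℝ) = 1)
  omega

lemma jacobiTheta₂_ofReal_ne_zero {τ : ℂ} (hτ : 0 < τ.im) (h : ThetaZerosInLattice (2 * τ))
    (x : ℝ) : jacobiTheta₂ x (2 * τ) ≠ 0 := by
  have hθ : jtheta (2 * τ) (x - τ - 1 / 2) ≠ 0 :=
    mt (h _) (notMem_lattice_two_mul_of_im_eq hτ (by simp))
  rwa [Ne, jtheta_eq_zero_iff_jacobiTheta₂_eq_zero,
    show (x : ℂ) - τ - 1 / 2 + 2 * τ / 2 + 1 / 2 = x by ring] at hθ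

lemma jtheta_half_mul_self {τ : ℂ} (hτ : 0 < τ.im) :
    jtheta τ (1 / 2) * jtheta τ (1 / 2) = 2 * jtheta (2 * τ) (1 / 2) * jacobiTheta₂ 0 (2 * τ) := by
  have h := jtheta_mul_jtheta hτ (1 / 2) (1 / 2)
  rw [show (1 / 2 + 1 / 2 : ℂ) = 0 + 1 by norm_num, jacobiTheta₂_add_left,
    show (1 / 2 - 1 / 2 - 1 / 2 : ℂ) = -(1 / 2) by norm_num, jtheta_neg] at h
  rw [h]
  ring_nf

lemma jtheta_half_ne_zero {τ : ℂ} (hτ : 0 < τ.im) (h : ThetaZerosInLattice (2 * τ)) :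
    jtheta τ (1 / 2) ≠ 0 := by
  have hθ : jtheta (2 * τ) (1 / 2) ≠ 0 :=
    mt (h _) (half_notMem_lattice (two_mul_im_pos hτ))
  have hJ := jacobiTheta₂_ofReal_ne_zero hτ h 0
  rw [ofReal_zero] at hJ
  intro h0
  have := jtheta_half_mul_self hτ
  rw [h0, zero_mul] at this
  exact mul_ne_zero (mul_ne_zero two_ne_zero hθ) hJ this.symm

theorem ThetaZerosInLattice.of_two_mul {τ : ℂ} (hτ : 0 < τ.im)
    (h : ThetaZerosInLattice (2 * τ)) : ThetaZerosInLattice τ := by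
  intro w hw
  -- at `v = w - 1/2` the second term of the duplication formula is `ϑ(·|2τ) θ(0|2τ) = 0`
  have hdup := jtheta_mul_jtheta hτ w (w - 1 / 2)
  rw [hw, zero_mul, show w - (w - 1 / 2) - 1 / 2 = (0 : ℂ) by ring, jtheta_zero, mul_zero,
    sub_zero, show w + (w - 1 / 2) - 1 / 2 = 2 * w - 1 by ring,
    show w - (w - 1 / 2) = ((1 / 2 : ℝ) : ℂ) by push_cast; ring] at hdup
  obtain ⟨a, b, hab⟩ :=
    h _ ((mul_eq_zero.mp hdup.symm).resolve_right (jacobiTheta₂_ofReal_ne_zero hτ h _))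
  rcases Int.even_or_odd a with ⟨c, rfl⟩ | ⟨c, rfl⟩
  · refine absurd ?_ (jtheta_half_ne_zero hτ h)
    rwa [← jtheta_add_eq_zero_iff ⟨c, b, rfl⟩,
      show 1 / 2 + ((c : ℂ) + τ * b) = w by push_cast at hab; linear_combination -hab / 2]
  · exact ⟨c + 1, b, by push_cast at hab ⊢; linear_combination hab / 2⟩

def dirichletKernel (n : ℕ) (z : ℂ) : ℂ :=
  ∑ j ∈ Finset.range (2 * n + 1), exp (2 * π * I * (j - n) * z)

lemma exp_sub_exp_neg_mul_dirichletKernel (n : ℕ) (z : ℂ) :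
    (exp (π * I * z) - exp (-(π * I * z))) * dirichletKernel n z =
      exp ((2 * n + 1) * (π * I * z)) - exp (-((2 * n + 1) * (π * I * z))) := by
  set f : ℕ → ℂ := fun j ↦ exp ((2 * j - 2 * n - 1) * (π * I * z))
  have htel : ∀ j ∈ Finset.range (2 * n + 1),
      (exp (π * I * z) - exp (-(π * I * z))) * exp (2 * π * I * (j - n) * z) = f (j + 1) - f j := by
    intro j _
    simp only [f, sub_mul, ← exp_add]
    push_cast
    ring_nf
  rw [dirichletKernel, Finset.mul_sum, Finset.sum_congr rfl htel, Finset.sum_range_sub]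
  simp only [f]
  push_cast
  ring_nf

lemma norm_dirichletKernel_le (n : ℕ) (z : ℂ) :
    ‖dirichletKernel n z‖ ≤ (2 * n + 1) * Real.exp (2 * π * n * |z.im|) := by
  refine (norm_sum_le _ _).trans ?_
  have hterm : ∀ j ∈ Finset.range (2 * n + 1),
      ‖exp (2 * π * I * (j - n) * z)‖ ≤ Real.exp (2 * π * n * |z.im|) := by
    intro j hj
    have hj : (j : ℝ) ≤ 2 * n := by exact_mod_cast Nat.lt_succ_iff.mp (Finset.mem_range.mp hj)
    rw [norm_exp, Real.exp_le_exp]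
    have hre : (2 * π * I * (j - n) * z).re = -(2 * π * ((j : ℝ) - n) * z.im) := by simp
    rw [hre]
    have habs : |(j : ℝ) - n| ≤ n :=
      abs_le.mpr ⟨by linarith [(Nat.cast_nonneg j : (0 : ℝ) ≤ j)], by linarith⟩
    calc -(2 * π * ((j : ℝ) - n) * z.im) ≤ |2 * π * ((j : ℝ) - n) * z.im| := neg_le_abs _
      _ = 2 * π * |(j : ℝ) - n| * |z.im| := by rw [abs_mul, abs_mul, abs_of_pos Real.two_pi_pos]
      _ ≤ 2 * π * n * |z.im| := by gcongr
  refine (Finset.sum_le_card_nsmul _ _ _ hterm).trans_eq ?_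
  rw [Finset.card_range, nsmul_eq_mul]
  push_cast
  ring

def jthetaPairTerm (τ z : ℂ) (n : ℕ) : ℂ :=
  exp (π * I * τ * (n ^ 2 + n) + n * (π * I)) * dirichletKernel n z

lemma jthetaTerm_add_jthetaTerm_neg (τ z : ℂ) (n : ℕ) :
    jthetaTerm τ z n + jthetaTerm τ z (-(n + 1)) =
      exp (π * I * τ / 4) * (exp (π * I * z) - exp (-(π * I * z))) * jthetaPairTerm τ z n := by
  have hD := exp_sub_exp_neg_mul_dirichletKernel n z
  set A : ℂ := π * I * τ / 4 + (π * I * τ * (n ^ 2 + n) + n * (π * I))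
  set B : ℂ := (2 * n + 1) * (π * I * z)
  have hpos : jthetaTerm τ z n = exp A * exp B := by
    rw [jthetaTerm_eq_exp, ← exp_add]
    exact exp_eq_exp_iff_exists_int.mpr ⟨0, by push_cast; ring⟩
  have hneg : jthetaTerm τ z (-(n + 1)) = -(exp A * exp (-B)) := by
    rw [jthetaTerm_eq_exp, neg_eq_neg_one_mul (exp A * _), ← exp_pi_mul_I, ← exp_add, ← exp_add]
    exact exp_eq_exp_iff_exists_int.mpr ⟨-(n + 1), by push_cast; ring⟩
  rw [hpos, hneg, jthetaPairTerm, exp_add]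
  linear_combination -(exp (π * I * τ / 4) * exp (π * I * τ * (n ^ 2 + n) + n * (π * I))) * hD

def jthetaReduced (τ z : ℂ) : ℂ := ∑' n : ℕ, jthetaPairTerm τ z n

lemma jtheta_eq_mul_jthetaReduced {τ : ℂ} (hτ : 0 < τ.im) (z : ℂ) :
    jtheta τ z = -I * exp (π * I * τ / 4) * (exp (π * I * z) - exp (-(π * I * z))) *
      jthetaReduced τ z := by
  rw [jtheta_eq_tsum, ← tsum_nat_add_neg_add_one (summable_norm_jthetaTerm hτ z).of_norm]
  simp_rw [jthetaTerm_add_jthetaTerm_neg, jthetaReduced, tsum_mul_left, mul_assoc]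

lemma norm_jthetaPairTerm_le {τ z : ℂ} (h1 : 1 ≤ τ.im) (hz : |z.im| ≤ τ.im / 2) (n : ℕ) :
    ‖jthetaPairTerm τ z n‖ ≤ Real.exp (-1) ^ n := by
  have hre : (π * I * τ * (n ^ 2 + n) + n * (π * I)).re = -(π * τ.im * (n ^ 2 + n)) := by
    simp [sq]
  have hexp : 2 * n - π * τ.im * (n ^ 2 + n) + 2 * π * n * |z.im| ≤ n * (-1) := by
    have hn : (n : ℝ) ≤ n ^ 2 := by exact_mod_cast Nat.le_self_pow two_ne_zero n
    nlinarith [Real.pi_gt_three, mul_le_mul_of_nonneg_left hz (by positivity : 0 ≤ 2 * π * n),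
      mul_le_mul_of_nonneg_right h1 (by positivity : (0 : ℝ) ≤ π * n ^ 2)]
  calc ‖jthetaPairTerm τ z n‖
        = Real.exp (-(π * τ.im * (n ^ 2 + n))) * ‖dirichletKernel n z‖ := by
          rw [jthetaPairTerm, norm_mul, norm_exp, hre]
    _ ≤ Real.exp (-(π * τ.im * (n ^ 2 + n))) *
          (Real.exp (2 * n) * Real.exp (2 * π * n * |z.im|)) := by
          refine mul_le_mul_of_nonneg_left ((norm_dirichletKernel_le n z).trans ?_) (by positivity)
          gcongr
          linarith [Real.add_one_le_exp (2 * n)]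
    _ = Real.exp (2 * n - π * τ.im * (n ^ 2 + n) + 2 * π * n * |z.im|) := by
          rw [← Real.exp_add, ← Real.exp_add]
          ring_nf
    _ ≤ Real.exp (n * (-1)) := Real.exp_le_exp.mpr hexp
    _ = Real.exp (-1) ^ n := Real.exp_nat_mul _ _

lemma jthetaReduced_ne_zero {τ z : ℂ} (h1 : 1 ≤ τ.im) (hz : |z.im| ≤ τ.im / 2) :
    jthetaReduced τ z ≠ 0 := by
  have hr : Real.exp (-1) < 1 / 2 := by
    rw [Real.exp_neg, inv_lt_comm₀ (Real.exp_pos 1) (by norm_num)]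
    linarith [Real.exp_one_gt_d9]
  set r := Real.exp (-1)
  have hr0 : 0 ≤ r := (Real.exp_pos _).le
  have hbound := norm_jthetaPairTerm_le h1 hz
  have hsum : Summable (jthetaPairTerm τ z) :=
    .of_norm_bounded (summable_geometric_of_lt_one hr0 (by linarith)) hbound
  have htail : ‖∑' n, jthetaPairTerm τ z (n + 1)‖ ≤ r * (1 - r)⁻¹ := by
    refine tsum_of_norm_bounded ?_ fun n ↦ hbound (n + 1)
    simpa only [pow_succ'] using (hasSum_geometric_of_lt_one hr0 (by linarith)).mul_left r
  have h0 : jthetaPairTerm τ z 0 = 1 := by simp [jthetaPairTerm, dirichletKernel]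
  rw [jthetaReduced, hsum.tsum_eq_zero_add, h0]
  intro h
  rw [eq_neg_of_add_eq_zero_right h, norm_neg, norm_one, ← div_eq_mul_inv,
    le_div_iff₀ (by linarith)] at htail
  linarith

lemma exists_abs_im_sub_mul_intCast_le {τ : ℂ} (hτ : 0 < τ.im) (z : ℂ) :
    ∃ b : ℤ, |(z - τ * b).im| ≤ τ.im / 2 := by
  refine ⟨round (z.im / τ.im), ?_⟩
  have him : (z - τ * round (z.im / τ.im)).im = τ.im * (z.im / τ.im - round (z.im / τ.im)) := by
    simp only [sub_im, mul_im, intCast_re, intCast_im, mul_zero, zero_add]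
    field_simp
  rw [him, abs_mul, abs_of_pos hτ]
  nlinarith [abs_sub_round (z.im / τ.im)]

lemma exists_eq_intCast_of_exp_sub_exp_neg_eq_zero {z : ℂ}
    (h : exp (π * I * z) - exp (-(π * I * z)) = 0) : ∃ m : ℤ, z = m := by
  obtain ⟨m, hm⟩ := exp_eq_exp_iff_exists_int.mp (sub_eq_zero.mp h)
  refine ⟨m, ?_⟩
  have : (2 * π * I) * (z - m) = 0 := by linear_combination hm
  simpa [sub_eq_zero, Real.pi_ne_zero, I_ne_zero] using this

theorem thetaZerosInLattice_of_one_le_im {τ : ℂ} (h1 : 1 ≤ τ.im) : ThetaZerosInLattice τ := by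
  have hτ : 0 < τ.im := one_pos.trans_le h1
  intro z hz
  obtain ⟨b, hb⟩ := exists_abs_im_sub_mul_intCast_le hτ z
  have hz' : jtheta τ (z - τ * b) = 0 := by
    rwa [← jtheta_add_eq_zero_iff (w := τ * b) ⟨0, b, by simp⟩, sub_add_cancel]
  rw [jtheta_eq_mul_jthetaReduced hτ] at hz'
  obtain ⟨m, hm⟩ := exists_eq_intCast_of_exp_sub_exp_neg_eq_zero <|
    (mul_eq_zero.mp ((mul_eq_zero.mp hz').resolve_right (jthetaReduced_ne_zero h1 hb))).resolve_left
      (mul_ne_zero (neg_ne_zero.mpr I_ne_zero) (exp_ne_zero _))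
  exact ⟨m, b, by rw [← hm]; ring⟩

lemma thetaZerosInLattice_of_one_le_two_pow_mul_im {τ : ℂ} (hτ : 0 < τ.im) {K : ℕ}
    (hK : 1 ≤ 2 ^ K * τ.im) : ThetaZerosInLattice τ := by
  induction K generalizing τ with
  | zero => exact thetaZerosInLattice_of_one_le_im (by simpa using hK)
  | succ K ih =>
    refine .of_two_mul hτ (ih (two_mul_im_pos hτ) ?_)
    simpa [pow_succ, mul_assoc] using hK

theorem jtheta_ne_zero {τ z : ℂ} (hτ : 0 < τ.im) (hz : z ∉ lattice τ) : jtheta τ z ≠ 0 := by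
  obtain ⟨K, hK⟩ := pow_unbounded_of_one_lt τ.im⁻¹ one_lt_two
  exact mt (thetaZerosInLattice_of_one_le_two_pow_mul_im hτ
    ((inv_lt_iff_one_lt_mul₀ hτ).mp hK).le z) hz

/- Each product `θ(u)θ(v)` is the determinant of the vectors `(θ(· - 1/2|2τ), ϑ(·|2τ))` at `u + v`
and `u - v`, so this is a Plücker relation between four such vectors. -/
theorem jtheta_three_term {τ : ℂ} (hτ : 0 < τ.im) (z z' μ μ' : ℂ) :
    jtheta τ (z + μ) * jtheta τ (z' + μ') * (jtheta τ (z + z') * jtheta τ (μ - μ')) =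
      jtheta τ (z + z' + μ') * jtheta τ μ * (jtheta τ (z + (μ - μ')) * jtheta τ z') -
        jtheta τ (z + z' + μ) * jtheta τ μ' * (jtheta τ z * jtheta τ (z' + (μ' - μ))) := by
  have dup : ∀ u v s d : ℂ, u + v = s → u - v = d → jtheta τ u * jtheta τ v =
      jtheta (2 * τ) (s - 1 / 2) * jacobiTheta₂ d (2 * τ) -
        jacobiTheta₂ s (2 * τ) * jtheta (2 * τ) (d - 1 / 2) := by
    rintro u v _ _ rfl rfl
    exact jtheta_mul_jtheta hτ u v
  rw [dup (z + μ) (z' + μ') (z + z' + μ + μ') (z + μ - z' - μ') (by ring) (by ring),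
    dup (z + z') (μ - μ') (z + z' + μ - μ') (z + z' - μ + μ') (by ring) (by ring),
    dup (z + z' + μ') μ (z + z' + μ + μ') (z + z' - μ + μ') (by ring) (by ring),
    dup (z + (μ - μ')) z' (z + z' + μ - μ') (z + μ - z' - μ') (by ring) (by ring),
    dup (z + z' + μ) μ' (z + z' + μ + μ') (z + z' + μ - μ') (by ring) (by ring),
    dup z (z' + (μ' - μ)) (z + z' - μ + μ') (z + μ - z' - μ') (by ring) (by ring)]
  ring

theorem kronecker_AYBE_general
    (τ : ℂ) (hτ : 0 < τ.im)
    (z z' μ μ' : ℂ)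
    (hz : z ∉ lattice τ) (hz' : z' ∉ lattice τ) (hzz : z + z' ∉ lattice τ)
    (hμ : μ ∉ lattice τ) (hμ' : μ' ∉ lattice τ)
    (hμμ' : μ - μ' ∉ lattice τ) :
    kronecker τ z μ * kronecker τ z' μ' =
      kronecker τ (z + z') μ' * kronecker τ z (μ - μ') +
        kronecker τ z' (μ' - μ) * kronecker τ (z + z') μ := by
  have h₁ := jtheta_ne_zero hτ hz
  have h₂ := jtheta_ne_zero hτ hz'
  have h₃ := jtheta_ne_zero hτ hzz
  have h₄ := jtheta_ne_zero hτ hμ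
  have h₅ := jtheta_ne_zero hτ hμ'
  have h₆ := jtheta_ne_zero hτ hμμ'
  have hodd : jtheta τ (μ' - μ) = -jtheta τ (μ - μ') := by rw [← jtheta_neg, neg_sub]
  unfold kronecker
  rw [hodd]
  field_simp
  linear_combination deriv (jtheta τ) 0 ^ 2 * jtheta_three_term hτ z z' μ μ'

/-- Fay's trisecant identity / AYBE for the Kronecker function:
`φ(z,μ)·φ(z',μ') = φ(z+z',μ')·φ(z,μ−μ') + φ(z',μ'−μ)·φ(z+z',μ)` whenever none of the
arguments lies in the lattice `ℤ + τℤ`. -/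
theorem kronecker_AYBE
    (τ : ℂ) (hτ : 0 < τ.im)
    (z z' μ μ' : ℂ)
    (hz : z ∉ lattice τ) (hz' : z' ∉ lattice τ) (hzz : z + z' ∉ lattice τ)
    (hμ : μ ∉ lattice τ) (hμ' : μ' ∉ lattice τ)
    (hμμ' : μ - μ' ∉ lattice τ) (hμ'μ : μ' - μ ∉ lattice τ) :
    kronecker τ z μ * kronecker τ z' μ' =
      kronecker τ (z + z') μ' * kronecker τ z (μ - μ') +
        kronecker τ z' (μ' - μ) * kronecker τ (z + z') μ :=
  kronecker_AYBE_general τ hτ z z' μ μ' hz hz' hzz hμ hμ' hμμ'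

end
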